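/- arXiv:1908.07947 — 7 statements merged into one kernel-verified Lean document; each statement's English description precedes it below -/
import Mathlib

section
/- Let k ≥ 1 and A ≥ 5 be integers with A ≡ 1 (mod 4). Then the polynomial f(x) = x^{2^{k+1}} + A x^{2^k} + A is not monogenic. -/
/-! With `u = θ ^ 2 ^ k` and `w = θ ^ (3 * 2 ^ (k - 1))` we have `u² + A u + A = 0` and `w² = u³`.
The element `α = (1 + w) / 2` satisfies `α² - α = (u³ - 1) / 4 = ((A - 1) / 4) (A u + A + 1)`,
so it is an algebraic integer when `A ≡ 1 (mod 4)`. But `3 * 2 ^ (k - 1) < deg f`, so `α` is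
written in the power basis `1, θ, θ², …` with the non-integral coordinate `1/2`, and `α ∉ ℤ[θ]`. -/

open Polynomial

/-- The discriminant of a monic integer polynomial, computed as the product of the
squared differences of its complex roots (listed with multiplicity). -/
noncomputable def polyDisc (f : Polynomial ℤ) : ℂ :=
  let l := ((f.map (Int.castRingHom ℂ)).roots).toList
  ∏ i ∈ Finset.range l.length, ∏ j ∈ Finset.range l.length,
    if i < j then (l.getD i 0 - l.getD j 0) ^ 2 else 1

/-- `f` is monogenic: monic, irreducible over `ℚ`, and `ℤ[θ] = 𝓞_K` for `K = ℚ(θ)`,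
`θ` a root of `f`. -/
def IsMonogenic (f : Polynomial ℤ) : Prop :=
  f.Monic ∧ Irreducible (f.map (Int.castRingHom ℚ)) ∧
  Algebra.adjoin ℤ {AdjoinRoot.root (f.map (Int.castRingHom ℚ))} =
    integralClosure ℤ (AdjoinRoot (f.map (Int.castRingHom ℚ)))

/-- The discriminant of `f` is an integer which is not squarefree. -/
def DiscNonSquarefree (f : Polynomial ℤ) : Prop :=
  ∃ d : ℤ, (d : ℂ) = polyDisc f ∧ ¬ Squarefree d

/-- The trinomial `x^n + A x^m + A`. -/
noncomputable def trinomialAA (n m : ℕ) (A : ℤ) : Polynomial ℤ :=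
  Polynomial.X ^ n + Polynomial.C A * Polynomial.X ^ m + Polynomial.C A

theorem aeval_trinomialAA {S : Type*} [CommRing S] (n m : ℕ) (A : ℤ) (x : S) :
    aeval x (trinomialAA n m A) = x ^ n + A * x ^ m + A := by
  simp [trinomialAA]

theorem degree_trinomialAA {n m : ℕ} (hmn : m < n) (A : ℤ) :
    (trinomialAA n m A).degree = n := by
  have hn : n ≠ 0 := by omega
  unfold trinomialAA
  compute_degree!
  · simp [hmn.ne', hn]
  · exact hmn.le
  · rw [max_eq_left hmn.le]; rfl

theorem AdjoinRoot.exists_map_eq_of_mk_mem_adjoin {R K : Type*} [CommRing R] [Field K]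
    [Algebra R K] {f : R[X]} (hf : f.Monic) {h : K[X]} (hdeg : h.degree < f.degree)
    (hmem : AdjoinRoot.mk (f.map (algebraMap R K)) h ∈
      Algebra.adjoin R {AdjoinRoot.root (f.map (algebraMap R K))}) :
    ∃ p : R[X], p.map (algebraMap R K) = h := by
  rw [Algebra.adjoin_singleton_eq_range_aeval] at hmem
  obtain ⟨p, hp⟩ := hmem
  have hfK : (f.map (algebraMap R K)).Monic := hf.map _
  have hdvd : f.map (algebraMap R K) ∣ p.map (algebraMap R K) - h := by
    rw [← AdjoinRoot.mk_eq_mk, ← AdjoinRoot.aeval_eq, aeval_map_algebraMap]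
    exact hp
  refine ⟨p %ₘ f, ?_⟩
  rw [map_modByMonic _ hf, modByMonic_eq_of_dvd_sub hfK hdvd,
    (modByMonic_eq_self_iff hfK).mpr (by rwa [hf.degree_map])]

theorem map_ne_C_half_mul_one_add_X_pow {m : ℕ} (hm : m ≠ 0) (p : ℤ[X]) :
    p.map (algebraMap ℤ ℚ) ≠ C 2⁻¹ * (1 + X ^ m) := by
  intro hp
  have hcoeff := congrArg (coeff · 0) hp
  simp only [coeff_map, eq_intCast, coeff_C_mul, coeff_add, coeff_one_zero, coeff_X_pow,
    if_neg hm.symm, add_zero, mul_one] at hcoeff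
  have : 2 * p.coeff 0 = 1 := by
    exact_mod_cast (show ((2 * p.coeff 0 : ℤ) : ℚ) = 1 by push_cast; rw [hcoeff]; norm_num)
  omega

theorem isIntegral_of_two_mul_eq_one_add {S : Type*} [CommRing S] [Algebra ℚ S]
    {A : ℤ} (hA : A % 4 = 1) {u w α : S} (hu : u ^ 2 + A * u + A = 0) (hw : w ^ 2 = u ^ 3)
    (hα : 2 * α = 1 + w) (hu_int : IsIntegral ℤ u) : IsIntegral ℤ α := by
  obtain ⟨B, rfl⟩ : ∃ B, A = 4 * B + 1 := ⟨A / 4, by omega⟩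
  have hquad : aeval α (X ^ 2 - X : ℤ[X]) =
      B * (((4 * B + 1 : ℤ) : S) * u + ((4 * B + 2 : ℤ) : S)) := by
    refine ((IsUnit.mk0 (4 : ℚ) (by norm_num)).map (algebraMap ℚ S)).mul_left_cancel ?_
    rw [map_ofNat]
    simp only [map_sub, map_pow, aeval_X]
    push_cast at hu ⊢
    linear_combination (2 * α - 1 + w) * hα + hw + (u - 4 * B - 1) * hu
  refine IsIntegral.of_aeval_monic (p := X ^ 2 - X) (monic_X_pow_sub (by rw [degree_X]; norm_num))
    (by rw [natDegree_sub_eq_left_of_natDegree_lt] <;> simp) ?_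
  rw [hquad]
  exact (isIntegral_intCast B).mul (((isIntegral_intCast _).mul hu_int).add (isIntegral_intCast _))

theorem isIntegral_of_two_mul_eq_one_add_pow {S : Type*} [CommRing S] [Algebra ℚ S] {j : ℕ}
    {A : ℤ} (hA : A % 4 = 1) {θ α : S}
    (hθ : aeval θ (trinomialAA (2 ^ (j + 1 + 1)) (2 ^ (j + 1)) A) = 0) (hθ_int : IsIntegral ℤ θ)
    (hα : 2 * α = 1 + θ ^ (3 * 2 ^ j)) : IsIntegral ℤ α := by
  have hu : (θ ^ 2 ^ (j + 1)) ^ 2 + A * θ ^ 2 ^ (j + 1) + A = 0 := by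
    rwa [← pow_mul, ← pow_succ, ← aeval_trinomialAA]
  have hw : (θ ^ (3 * 2 ^ j)) ^ 2 = (θ ^ 2 ^ (j + 1)) ^ 3 := by
    rw [← pow_mul, ← pow_mul]
    ring_nf
  exact isIntegral_of_two_mul_eq_one_add hA hu hw hα (hθ_int.pow _)

theorem not_monogenic_pow_two_A_cong_one_general
    (k : ℕ) (hk : 1 ≤ k) (A : ℤ) (hA4 : A % 4 = 1) :
    ¬ IsMonogenic (trinomialAA (2 ^ (k + 1)) (2 ^ k) A) := by
  rintro ⟨hmonic, -, hadj⟩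
  obtain ⟨j, rfl⟩ : ∃ j, k = j + 1 := ⟨k - 1, by omega⟩
  set f := trinomialAA (2 ^ (j + 1 + 1)) (2 ^ (j + 1)) A
  set θ := AdjoinRoot.root (f.map (Int.castRingHom ℚ))
  set h : ℚ[X] := C 2⁻¹ * (1 + X ^ (3 * 2 ^ j))
  have hθ : aeval θ f = 0 := by
    rw [← aeval_map_algebraMap ℚ, algebraMap_int_eq, AdjoinRoot.aeval_eq, AdjoinRoot.mk_self]
  have hα : 2 * AdjoinRoot.mk _ h = 1 + θ ^ (3 * 2 ^ j) := by
    rw [map_mul, ← mul_assoc, AdjoinRoot.mk_C, ← AdjoinRoot.algebraMap_eq,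
      ← map_ofNat (algebraMap ℚ _) 2, ← map_mul, mul_inv_cancel₀ two_ne_zero, map_one, one_mul]
    simp only [map_add, map_one, map_pow, AdjoinRoot.mk_X]
    rfl
  have hint := isIntegral_of_two_mul_eq_one_add_pow hA4 hθ ⟨f, hmonic, hθ⟩ hα
  have hdeg : h.degree < f.degree := by
    have hlt : 3 * 2 ^ j < 2 ^ (j + 1 + 1) := by
      have := Nat.two_pow_pos j; rw [pow_succ, pow_succ]; omega
    have hh : h.degree ≤ (3 * 2 ^ j : ℕ) := by
      simp only [h]; compute_degree; exact_mod_cast le_rfl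
    rw [degree_trinomialAA (Nat.pow_lt_pow_right (by norm_num) (by omega))]
    exact hh.trans_lt (by exact_mod_cast hlt)
  obtain ⟨p, hp⟩ := AdjoinRoot.exists_map_eq_of_mk_mem_adjoin hmonic hdeg (hadj ▸ hint)
  exact map_ne_C_half_mul_one_add_X_pow (by positivity) p hp

theorem not_monogenic_pow_two_A_cong_one
    (k : ℕ) (hk : 1 ≤ k) (A : ℤ) (hA : 5 ≤ A) (hA4 : A % 4 = 1) :
    ¬ IsMonogenic (trinomialAA (2 ^ (k + 1)) (2 ^ k) A) :=
  not_monogenic_pow_two_A_cong_one_general k hk A hA4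
end

section
/- Let t ≥ 2 be an integer, r a prime, κ a squarefree positive integer with r ∤ κ, and a a positive integer with gcd(a, t) = 1. Define F(x) = t^t x^{t−1} + (1−t)^{t−1} a^t r κ ∈ ℤ[x]. Then for every prime q there exists an integer z with gcd(z, q) = 1 such that F(z) ≢ 0 (mod q²). -/
private lemma one_add_pow (q : ℤ) (n : ℕ) : ∃ k : ℤ, (1+q)^n = 1 + n*q + q^2*k := by
  induction n with
  | zero => exact ⟨0, by ring⟩
  | succ n ih =>
    obtain ⟨k, hk⟩ := ih
    refine ⟨n + k + q*k, ?_⟩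
    rw [pow_succ, hk]
    push_cast
    ring

theorem no_local_obstruction
    (t : ℕ) (ht : 2 ≤ t)
    (r : ℕ) (hr : r.Prime)
    (κ : ℕ) (hκ0 : 0 < κ) (hκsf : Squarefree κ) (hrκ : ¬ r ∣ κ)
    (a : ℕ) (ha : 0 < a) (hgcd : Nat.gcd a t = 1)
    (q : ℕ) (hq : q.Prime) :
    ∃ z : ℤ, Int.gcd z (q : ℤ) = 1 ∧
      ¬ ((q : ℤ) ^ 2 ∣
          ((t : ℤ) ^ t * z ^ (t - 1)
            + (1 - (t : ℤ)) ^ (t - 1) * (a : ℤ) ^ t * (r : ℤ) * (κ : ℤ))) := by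
  have hqz : Prime (q : ℤ) := Nat.prime_iff_prime_int.mp hq
  have hg1 : Int.gcd (1 : ℤ) (q : ℤ) = 1 := by simp
  by_cases hqt : (q : ℤ) ∣ (t : ℤ)
  · -- q ∣ t : take z = 1
    refine ⟨1, hg1, fun hdvd => ?_⟩
    have h1 : (q : ℤ)^2 ∣ (t : ℤ)^t := by
      calc (q:ℤ)^2 ∣ (t:ℤ)^2 := pow_dvd_pow_of_dvd hqt 2
      _ ∣ (t:ℤ)^t := pow_dvd_pow _ ht
    have h2 : (q : ℤ)^2 ∣ (1 - (t : ℤ)) ^ (t - 1) * (a : ℤ) ^ t * (r : ℤ) * (κ : ℤ) := by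
      have := dvd_sub hdvd (h1.mul_right (1 ^ (t-1)))
      simpa using this
    have hc1 : IsCoprime ((q:ℤ)) ((1 - (t : ℤ)) ^ (t - 1) * (a : ℤ) ^ t) := by
      rw [hqz.coprime_iff_not_dvd]
      intro h
      rcases hqz.dvd_mul.mp h with h | h
      · have := hqz.dvd_of_dvd_pow h
        have : (q:ℤ) ∣ 1 := by
          have := dvd_add this hqt
          simpa using this
        exact hqz.not_isUnit (isUnit_of_dvd_one this)
      · have hqa : (q:ℤ) ∣ (a:ℤ) := hqz.dvd_of_dvd_pow h
        have hqa' : q ∣ a := by exact_mod_cast hqa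
        have hqt' : q ∣ t := by exact_mod_cast hqt
        have : q ∣ 1 := hgcd ▸ Nat.dvd_gcd hqa' hqt'
        exact hq.one_lt.ne' (Nat.dvd_one.mp this)
    have h3 : (q : ℤ)^2 ∣ (r : ℤ) * (κ : ℤ) := by
      have hc2 : IsCoprime ((q:ℤ)^2) ((1 - (t : ℤ)) ^ (t - 1) * (a : ℤ) ^ t) := hc1.pow_left
      refine hc2.dvd_of_dvd_mul_left ?_
      have heq : (1 - (t : ℤ)) ^ (t - 1) * (a : ℤ) ^ t * ((r:ℤ) * (κ:ℤ)) =
          (1 - (t : ℤ)) ^ (t - 1) * (a : ℤ) ^ t * (r : ℤ) * (κ : ℤ) := by ring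
      rw [heq]; exact h2
    have hsf : Squarefree (r * κ) := by
      rw [Nat.squarefree_mul ((Nat.Prime.coprime_iff_not_dvd hr).mpr hrκ)]
      exact ⟨hr.squarefree, hκsf⟩
    have h4 : q * q ∣ r * κ := by
      have : (q:ℤ) * q ∣ (r:ℤ) * κ := by rw [← sq]; exact h3
      exact_mod_cast this
    exact hq.not_isUnit (hsf q h4)
  · by_cases hqt1 : (q : ℤ) ∣ ((t : ℤ) - 1)
    · -- q ∣ t-1 : take z = 1, note t-1 ≥ 2
      have ht3 : 2 ≤ t - 1 := by
        by_contra h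
        have ht2 : t = 2 := by omega
        subst ht2
        norm_num at hqt1
        have := Int.eq_one_of_dvd_one (by positivity) hqt1
        have hq1 : q = 1 := by exact_mod_cast this
        exact hq.ne_one hq1
      refine ⟨1, hg1, fun hdvd => ?_⟩
      have h2 : (q : ℤ)^2 ∣ (1 - (t : ℤ)) ^ (t - 1) := by
        have : (q:ℤ) ∣ (1 - (t:ℤ)) := by
          have h := dvd_neg.mpr hqt1
          rwa [neg_sub] at h
        calc (q:ℤ)^2 ∣ (1-(t:ℤ))^2 := pow_dvd_pow_of_dvd this 2
        _ ∣ (1-(t:ℤ))^(t-1) := pow_dvd_pow _ ht3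
      have h1 : (q : ℤ)^2 ∣ (t : ℤ)^t := by
        have h2' : (q : ℤ)^2 ∣ (1 - (t : ℤ)) ^ (t - 1) * (a : ℤ) ^ t * (r : ℤ) * (κ : ℤ) :=
          ((h2.mul_right ((a:ℤ)^t)).mul_right ((r:ℤ))).mul_right ((κ:ℤ))
        have := dvd_sub hdvd h2'
        simpa using this
      have : (q:ℤ) ∣ (t:ℤ) := hqz.dvd_of_dvd_pow (dvd_trans (dvd_pow_self _ two_ne_zero) h1)
      exact hqt this
    · -- q ∤ t, q ∤ t-1 : z = 1 or z = 1+q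
      by_cases hdvd1 : (q : ℤ)^2 ∣ ((t : ℤ) ^ t * 1 ^ (t - 1)
            + (1 - (t : ℤ)) ^ (t - 1) * (a : ℤ) ^ t * (r : ℤ) * (κ : ℤ))
      · refine ⟨1 + q, ?_, fun hdvd2 => ?_⟩
        · have : IsCoprime ((1:ℤ)+q) (q:ℤ) := ⟨1, -1, by ring⟩
          exact Int.isCoprime_iff_gcd_eq_one.mp this
        · obtain ⟨k, hk⟩ := one_add_pow (q : ℤ) (t - 1)
          have hdiff : (q:ℤ)^2 ∣ (t:ℤ)^t * ((t-1 : ℕ) * q) := by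
            have h := dvd_sub hdvd2 hdvd1
            have h' : (q:ℤ)^2 ∣ (t:ℤ)^t * ((1+q)^(t-1) - 1) := by
              have : (t:ℤ)^t * ((1+q)^(t-1) - 1) =
                ((t : ℤ) ^ t * (1+q) ^ (t - 1)
                  + (1 - (t : ℤ)) ^ (t - 1) * (a : ℤ) ^ t * (r : ℤ) * (κ : ℤ))
                - ((t : ℤ) ^ t * 1 ^ (t - 1)
                  + (1 - (t : ℤ)) ^ (t - 1) * (a : ℤ) ^ t * (r : ℤ) * (κ : ℤ)) := by ring
              rw [this]; exact h
            have heq : (t:ℤ)^t * ((t-1 : ℕ) * q) =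
                (t:ℤ)^t * ((1+q)^(t-1) - 1) - (q:ℤ)^2 * ((t:ℤ)^t * k) := by
              rw [hk]; ring
            rw [heq]
            exact dvd_sub h' (Dvd.intro _ rfl)
          have hq0 : (q:ℤ) ≠ 0 := by exact_mod_cast hq.pos.ne'
          have : (q:ℤ) ∣ (t:ℤ)^t * (t-1 : ℕ) := by
            have h := hdiff
            rw [sq, ← mul_assoc] at h
            have := (mul_dvd_mul_iff_right hq0).mp h
            exact this
          rcases hqz.dvd_mul.mp this with h | h
          · exact hqt (hqz.dvd_of_dvd_pow h)
          · apply hqt1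
            have : ((t - 1 : ℕ) : ℤ) = (t:ℤ) - 1 := by
              have : 1 ≤ t := by omega
              push_cast [this]; ring
            rwa [this] at h
      · exact ⟨1, hg1, hdvd1⟩
end

section
/- Let k ≥ 1 be an integer. For every integer j with 1 ≤ j ≤ 3^k − 1, the binomial coefficient C(3^k, j) is divisible by 3, and C(3^k, j)/3 ≡ 1 (mod 3) if j ∈ {3^{k−1}, 2·3^{k−1}}, while C(3^k, j)/3 ≡ 0 (mod 3) otherwise. -/
/-!
Write `j = 3^(k-1) t`. By Kummer's theorem the `3`-adic valuation of `C(3^k, j)` is `k - v₃(j)`,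
so `9` divides it unless `t ∈ {1, 2}`. In that case `j · C(3^k, j) = 3^k · C(3^k - 1, j - 1)` gives
`t · (C(3^k, j) / 3) = C(3^k - 1, j - 1) ≡ (-1)^(j-1) (mod 3)`, because row `3^k - 1` of Pascal's
triangle alternates modulo `3`: consecutive entries add up to an entry of row `3^k`, which vanishes
modulo `3`.
As `(-1)^(3^(k-1)) = -1`, the residue of `C(3^k, 3^(k-1) t) / 3` does not depend on `k`, and
`C(3, t) / 3 = 1`.
-/

namespace Nat

variable {p : ℕ}

theorem sq_dvd_choose_prime_pow (hp : p.Prime) {n j : ℕ} (hj0 : j ≠ 0) (hjn : j ≤ p ^ (n + 1))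
    (hj : ¬ p ^ n ∣ j) : p ^ 2 ∣ (p ^ (n + 1)).choose j := by
  have hv : j.factorization p < n := by
    by_contra! h
    exact hj ((Nat.pow_dvd_pow p h).trans (ordProj_dvd j p))
  rw [hp.pow_dvd_iff_le_factorization (choose_ne_zero hjn),
    factorization_choose_prime_pow hp hjn hj0]
  omega

theorem cast_choose_prime_pow_sub_one [Fact p.Prime] {n m : ℕ} (hm : m < p ^ n) :
    ((p ^ n - 1).choose m : ZMod p) = (-1) ^ m := by
  induction m with
  | zero => simp
  | succ m ih =>
    have hpascal := choose_succ_succ' (p ^ n - 1) m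
    rw [Nat.sub_add_cancel (by omega)] at hpascal
    have hdvd : p ∣ (p ^ n).choose (m + 1) :=
      Prime.dvd_choose_pow Fact.out (succ_ne_zero m) (by omega)
    have hzero := (ZMod.natCast_eq_zero_iff _ p).mpr hdvd
    rw [hpascal, cast_add, ih (by omega)] at hzero
    linear_combination hzero

theorem cast_choose_prime_pow_succ_mul_div_mul [Fact p.Prime] (n : ℕ) {t : ℕ} (ht0 : 0 < t)
    (htp : t < p) :
    (((p ^ (n + 1)).choose (p ^ n * t) / p : ℕ) : ZMod p) * t = -(-1) ^ t := by
  have hp : p.Prime := Fact.out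
  have hpn : 0 < p ^ n := pow_pos hp.pos n
  have hj0 : 0 < p ^ n * t := Nat.mul_pos hpn ht0
  have hj : p ^ n * t < p ^ (n + 1) := by rw [pow_succ]; exact Nat.mul_lt_mul_of_pos_left htp hpn
  obtain ⟨q, hq⟩ : p ∣ (p ^ (n + 1)).choose (p ^ n * t) := hp.dvd_choose_pow hj0.ne' hj.ne
  have hid := add_one_mul_choose_eq (p ^ (n + 1) - 1) (p ^ n * t - 1)
  rw [Nat.sub_add_cancel (by omega), Nat.sub_add_cancel hj0, hq] at hid
  have hqt : q * t = (p ^ (n + 1) - 1).choose (p ^ n * t - 1) := by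
    refine Nat.eq_of_mul_eq_mul_left (Nat.mul_pos hpn hp.pos) ?_
    rw [← pow_succ, hid]
    ring
  have hcast := congrArg (fun x : ℕ ↦ (x : ZMod p)) hqt
  simp only [cast_mul, cast_choose_prime_pow_sub_one (show p ^ n * t - 1 < p ^ (n + 1) by omega)]
    at hcast
  have hsign : ((-1 : ZMod p) ^ (p ^ n * t - 1)) * (-1) = (-1) ^ t := by
    rw [← pow_succ, Nat.sub_add_cancel hj0, pow_mul, ZMod.pow_card_pow]
  rw [hq, Nat.mul_div_cancel_left q hp.pos, hcast, ← hsign]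
  ring

theorem choose_prime_pow_succ_mul_div_modEq [Fact p.Prime] (n : ℕ) {t : ℕ} (ht0 : 0 < t)
    (htp : t < p) : (p ^ (n + 1)).choose (p ^ n * t) / p ≡ p.choose t / p [MOD p] := by
  have ht : (t : ZMod p) ≠ 0 := by
    rw [Ne, ZMod.natCast_eq_zero_iff]
    exact Nat.not_dvd_of_pos_of_lt ht0 htp
  rw [← ZMod.natCast_eq_natCast_iff]
  have hbase := cast_choose_prime_pow_succ_mul_div_mul (p := p) 0 ht0 htp
  rw [zero_add, pow_one, pow_zero, one_mul] at hbase
  exact mul_right_cancel₀ ht ((cast_choose_prime_pow_succ_mul_div_mul n ht0 htp).trans hbase.symm)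

end Nat

theorem choose_three_pow_div_three_mod_three
    (k : ℕ) (hk : 1 ≤ k) (j : ℕ) (hj1 : 1 ≤ j) (hj2 : j ≤ 3 ^ k - 1) :
    3 ∣ Nat.choose (3 ^ k) j ∧
      (Nat.choose (3 ^ k) j / 3) % 3 =
        if j = 3 ^ (k - 1) ∨ j = 2 * 3 ^ (k - 1) then 1 else 0 := by
  obtain ⟨n, rfl⟩ : ∃ n, k = n + 1 := ⟨k - 1, by omega⟩
  have h3 : Nat.Prime 3 := Nat.prime_three
  have := Fact.mk h3
  refine ⟨h3.dvd_choose_pow (by omega) (by omega), ?_⟩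
  rw [Nat.add_sub_cancel]
  split_ifs with hj
  · have hmid (t : ℕ) (ht0 : 0 < t) (ht3 : t < 3) :
        (3 ^ (n + 1)).choose (3 ^ n * t) / 3 % 3 = 1 := by
      rw [Nat.choose_prime_pow_succ_mul_div_modEq n ht0 ht3]
      interval_cases t <;> rfl
    rcases hj with rfl | rfl
    · simpa using hmid 1 one_pos (by norm_num)
    · simpa [mul_comm] using hmid 2 two_pos (by norm_num)
  · have hpow : ¬ 3 ^ n ∣ j := by
      rintro ⟨t, rfl⟩
      have ht3 : t < 3 := Nat.lt_of_mul_lt_mul_left (a := 3 ^ n) (by rw [← pow_succ]; omega)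
      interval_cases t <;> simp_all [mul_comm]
    have h9 := Nat.sq_dvd_choose_prime_pow h3 (by omega) (by omega) hpow
    omega
end

section
/- Let k ≥ 1 be an integer. For every integer j with 1 ≤ j ≤ 5^k − 1, the binomial coefficient C(5^k, j) is divisible by 5, and C(5^k, j)/5 ≡ 1 (mod 5) if j ∈ {5^{k−1}, 4·5^{k−1}}, C(5^k, j)/5 ≡ 2 (mod 5) if j ∈ {2·5^{k−1}, 3·5^{k−1}}, and C(5^k, j)/5 ≡ 0 (mod 5) otherwise. -/
open Polynomial

lemma h25P : (25 : (ZMod 25)[X]) = 0 := by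
  have h : ((25:ℕ) : ZMod 25) = 0 := ZMod.natCast_self 25
  have h2 : ((25:ℕ) : (ZMod 25)[X]) = Polynomial.C ((25:ℕ) : ZMod 25) := by
    rw [← Polynomial.C_eq_natCast]
  have h3 : (25 : (ZMod 25)[X]) = ((25:ℕ) : (ZMod 25)[X]) := by norm_cast
  rw [h3, h2, h, map_zero]

lemma pow25 (y : (ZMod 25)[X]) : (1 + y)^25 = (1 + y^5)^5 := by
  calc (1+y)^25 = ((1 + y^5) + 5*(y + 2*y^2 + 2*y^3 + y^4))^5 := by ring
    _ = (1+y^5)^5 + 25*((1+y^5)^4*(y + 2*y^2 + 2*y^3 + y^4)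
        + 10*(1+y^5)^3*(y + 2*y^2 + 2*y^3 + y^4)^2
        + 50*(1+y^5)^2*(y + 2*y^2 + 2*y^3 + y^4)^3
        + 125*(1+y^5)*(y + 2*y^2 + 2*y^3 + y^4)^4
        + 125*(y + 2*y^2 + 2*y^3 + y^4)^5) := by ring
    _ = (1+y^5)^5 := by rw [h25P]; ring

lemma main_pow (k : ℕ) : ((1 + X)^(5^(k+1)) : (ZMod 25)[X]) = (1 + X^(5^k))^5 := by
  induction k with
  | zero => norm_num
  | succ n ih =>
    have e : (5:ℕ)^(n+2) = 5^(n+1)*5 := by ring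
    rw [e, pow_mul, ih, ← pow_mul]
    rw [show (5*5 = 25) from rfl, pow25, ← pow_mul]
    norm_num [pow_succ]

lemma expand5 (m : ℕ) : ((1 + X^m)^5 : (ZMod 25)[X]) =
    1 + Polynomial.C 5 * X^m + Polynomial.C 10 * X^(m*2) + Polynomial.C 10 * X^(m*3)
      + Polynomial.C 5 * X^(m*4) + X^(m*5) := by
  have c5 : (Polynomial.C 5 : (ZMod 25)[X]) = 5 := by
    have : ((5:ℕ) : (ZMod 25)[X]) = Polynomial.C ((5:ℕ) : ZMod 25) := by
      rw [← Polynomial.C_eq_natCast]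
    norm_num at this
    rw [this]
  have c10 : (Polynomial.C 10 : (ZMod 25)[X]) = 10 := by
    have : ((10:ℕ) : (ZMod 25)[X]) = Polynomial.C ((10:ℕ) : ZMod 25) := by
      rw [← Polynomial.C_eq_natCast]
    norm_num at this
    rw [this]
  simp only [pow_mul, c5, c10]
  ring

lemma coeff5 (m j : ℕ) (hm : 1 ≤ m) (hj1 : 1 ≤ j) (hj2 : j ≤ 5*m - 1) :
    ((1 + X^m)^5 : (ZMod 25)[X]).coeff j =
      if j = m ∨ j = 4*m then 5 else if j = 2*m ∨ j = 3*m then 10 else 0 := by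
  rw [expand5]
  simp only [coeff_add, coeff_one, coeff_C_mul, coeff_X_pow]
  split_ifs <;> first | omega | norm_num

lemma mod_of_cast (c r : ℕ) (h : (c : ZMod 25) = (r : ZMod 25)) : c % 25 = r % 25 :=
  (ZMod.natCast_eq_natCast_iff' c r 25).mp h

theorem choose_five_pow_div_five_mod_five
    (k : ℕ) (hk : 1 ≤ k) (j : ℕ) (hj1 : 1 ≤ j) (hj2 : j ≤ 5 ^ k - 1) :
    5 ∣ Nat.choose (5 ^ k) j ∧
      (Nat.choose (5 ^ k) j / 5) % 5 =
        if j = 5 ^ (k - 1) ∨ j = 4 * 5 ^ (k - 1) then 1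
        else if j = 2 * 5 ^ (k - 1) ∨ j = 3 * 5 ^ (k - 1) then 2
        else 0 := by
  obtain ⟨k', rfl⟩ : ∃ k', k = k' + 1 := ⟨k - 1, (Nat.succ_pred_eq_of_pos hk).symm⟩
  have hm : 1 ≤ 5 ^ k' := Nat.one_le_pow _ _ (by norm_num)
  have hj2' : j ≤ 5 * 5 ^ k' - 1 := by
    have : (5:ℕ) ^ (k' + 1) = 5 * 5 ^ k' := by rw [pow_succ]; ring
    omega
  have hcast : ((Nat.choose (5 ^ (k'+1)) j : ℕ) : ZMod 25) =
      if j = 5 ^ k' ∨ j = 4 * 5 ^ k' then 5 else if j = 2 * 5 ^ k' ∨ j = 3 * 5 ^ k' then 10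
      else 0 := by
    rw [← Polynomial.coeff_one_add_X_pow (ZMod 25) (5^(k'+1)) j, main_pow,
      coeff5 _ _ hm hj1 hj2']
  simp only [Nat.add_sub_cancel]
  set c := Nat.choose (5 ^ (k'+1)) j with hc
  split_ifs at hcast ⊢ with h1 h2
  · have := mod_of_cast c 5 (by exact_mod_cast hcast)
    norm_num at this
    omega
  · have := mod_of_cast c 10 (by exact_mod_cast hcast)
    norm_num at this
    omega
  · have := mod_of_cast c 0 (by exact_mod_cast hcast)
    norm_num at this
    omega
end

section
/- Let k ≥ 1 be an integer. For every integer j with 1 ≤ j ≤ 7^k − 1, the binomial coefficient C(7^k, j) is divisible by 7, and C(7^k, j)/7 ≡ 1 (mod 7) if j ∈ {7^{k−1}, 6·7^{k−1}}, C(7^k, j)/7 ≡ 3 (mod 7) if j ∈ {2·7^{k−1}, 5·7^{k−1}}, C(7^k, j)/7 ≡ 5 (mod 7) if j ∈ {3·7^{k−1}, 4·7^{k−1}}, and C(7^k, j)/7 ≡ 0 (mod 7) otherwise. -/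
open Polynomial

lemma sqz_pow {R : Type*} [CommRing R] (a b : R) (h : b^2 = 0) (n : ℕ) :
    (a+b)^(n+1) = a^(n+1) + (n+1)*a^n*b := by
  induction n with
  | zero => ring
  | succ n ih =>
    rw [pow_succ, ih]
    push_cast
    ring_nf
    rw [h]
    ring

lemma seven_pow (y : (ZMod 49)[X]) :
    (1+y)^7 = 1 + y^7 + 7*(y + 3*y^2 + 5*y^3 + 5*y^4 + 3*y^5 + y^6) := by ring

lemma seven49 : (7:(ZMod 49)[X]) * 7 = 0 := by
  have h7 : (7:(ZMod 49)[X]) = C 7 := by norm_cast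
  rw [h7, ← C_mul]
  norm_num
  decide

lemma key (k : ℕ) (hk : 1 ≤ k) :
    (1 + X : (ZMod 49)[X])^(7^k) = 1 + X^(7^k) +
      7*(X^(7^(k-1)) + 3*X^(7^(k-1)*2) + 5*X^(7^(k-1)*3) + 5*X^(7^(k-1)*4)
        + 3*X^(7^(k-1)*5) + X^(7^(k-1)*6)) := by
  induction k with
  | zero => omega
  | succ k ih =>
    rcases Nat.eq_zero_or_pos k with rfl | hk'
    · simpa using seven_pow X
    · have ih' := ih hk'
      have h1 : (7:ℕ)^(k+1) = 7^k * 7 := by ring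
      rw [h1, pow_mul, ih']
      set P : (ZMod 49)[X] := X^(7^(k-1)) + 3*X^(7^(k-1)*2) + 5*X^(7^(k-1)*3)
        + 5*X^(7^(k-1)*4) + 3*X^(7^(k-1)*5) + X^(7^(k-1)*6) with hP
      have hb : (7*P)^2 = 0 := by linear_combination (P*P) * seven49
      have h2 : ((1 + X^(7^k)) + 7*P)^7 = (1 + X^(7^k))^7 + 7*(1+X^(7^k))^6*(7*P) := by
        have := sqz_pow (1 + X^(7^k)) (7*P) hb 6
        norm_num at this
        convert this using 2
      have h3 : (7:(ZMod 49)[X])*(1+X^(7^k))^6*(7*P) = 0 := by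
        linear_combination ((1+X^(7^k))^6 * P) * seven49
      rw [show (1:(ZMod 49)[X]) + X^(7^k) + 7*P = (1 + X^(7^k)) + 7*P from by ring, h2, h3,
        add_zero, seven_pow (X^(7^k))]
      simp only [← pow_mul, Nat.add_sub_cancel]
      try ring

theorem choose_seven_pow_div_seven_mod_seven
    (k : ℕ) (hk : 1 ≤ k) (j : ℕ) (hj1 : 1 ≤ j) (hj2 : j ≤ 7 ^ k - 1) :
    7 ∣ Nat.choose (7 ^ k) j ∧
      (Nat.choose (7 ^ k) j / 7) % 7 =
        if j = 7 ^ (k - 1) ∨ j = 6 * 7 ^ (k - 1) then 1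
        else if j = 2 * 7 ^ (k - 1) ∨ j = 5 * 7 ^ (k - 1) then 3
        else if j = 3 * 7 ^ (k - 1) ∨ j = 4 * 7 ^ (k - 1) then 5
        else 0 := by
  have h := congrArg (fun p => Polynomial.coeff p j) (key k hk)
  simp only [coeff_one_add_X_pow, coeff_add, coeff_one, coeff_X_pow, mul_add,
    coeff_ofNat_mul, mul_ite, mul_one, mul_zero] at h
  set m := 7^(k-1) with hmdef
  have hm : 1 ≤ m := Nat.one_le_pow _ _ (by norm_num)
  have h7k : 7^k = 7*m := by
    rw [hmdef, ← pow_succ']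
    congr 1
    omega
  rw [h7k] at h hj2 ⊢
  -- helper to convert ZMod equation to a mod-49 statement
  have conv : ∀ r : ℕ, ((Nat.choose (7*m) j : ZMod 49)) = (r : ZMod 49) →
      Nat.choose (7*m) j % 49 = r % 49 := by
    intro r hr
    exact (ZMod.natCast_eq_natCast_iff' _ _ _).mp hr
  by_cases e1 : j = m
  · subst e1
    rw [if_neg (by omega), if_neg (by omega), if_pos rfl, if_neg (by omega),
      if_neg (by omega), if_neg (by omega), if_neg (by omega), if_neg (by omega)] at h
    norm_num at h
    have := conv 7 (by exact_mod_cast h)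
    rw [if_pos (Or.inl rfl)]
    omega
  by_cases e2 : j = m*2
  · subst e2
    rw [if_neg (by omega), if_neg (by omega), if_neg (by omega), if_pos rfl,
      if_neg (by omega), if_neg (by omega), if_neg (by omega), if_neg (by omega)] at h
    norm_num at h
    have := conv 21 (by exact_mod_cast h)
    rw [if_neg (by omega), if_pos (Or.inl (by omega))]
    omega
  by_cases e3 : j = m*3
  · subst e3
    rw [if_neg (by omega), if_neg (by omega), if_neg (by omega), if_neg (by omega),
      if_pos rfl, if_neg (by omega), if_neg (by omega), if_neg (by omega)] at h
    norm_num at h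
    have := conv 35 (by exact_mod_cast h)
    rw [if_neg (by omega), if_neg (by omega), if_pos (Or.inl (by omega))]
    omega
  by_cases e4 : j = m*4
  · subst e4
    rw [if_neg (by omega), if_neg (by omega), if_neg (by omega), if_neg (by omega),
      if_neg (by omega), if_pos rfl, if_neg (by omega), if_neg (by omega)] at h
    norm_num at h
    have := conv 35 (by exact_mod_cast h)
    rw [if_neg (by omega), if_neg (by omega), if_pos (Or.inr (by omega))]
    omega
  by_cases e5 : j = m*5
  · subst e5
    rw [if_neg (by omega), if_neg (by omega), if_neg (by omega), if_neg (by omega),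
      if_neg (by omega), if_neg (by omega), if_pos rfl, if_neg (by omega)] at h
    norm_num at h
    have := conv 21 (by exact_mod_cast h)
    rw [if_neg (by omega), if_pos (Or.inr (by omega))]
    omega
  by_cases e6 : j = m*6
  · subst e6
    rw [if_neg (by omega), if_neg (by omega), if_neg (by omega), if_neg (by omega),
      if_neg (by omega), if_neg (by omega), if_neg (by omega), if_pos rfl] at h
    norm_num at h
    have := conv 7 (by exact_mod_cast h)
    rw [if_pos (Or.inr (by omega))]
    omega
  · rw [if_neg (by omega), if_neg (by omega), if_neg e1, if_neg e2, if_neg e3,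
      if_neg e4, if_neg e5, if_neg e6] at h
    norm_num at h
    have := conv 0 (by exact_mod_cast h)
    rw [if_neg (by omega), if_neg (by omega), if_neg (by omega)]
    omega
end

section
/- Let κ > 1 be a squarefree divisor of 210, let p be a prime dividing κ, and let t ≥ 2 be an integer. Then (t−1)^{t−1}(κ² − 1) + (−1)^{t−1} t^t ≢ 0 (mod p²). -/
/-!
Modulo `p ^ 2` the factor `κ ^ 2 - 1` is `-1`, so with `t = u + 1` the expression becomes
`-(u ^ u + (-1) ^ (u + 1) (u + 1) ^ (u + 1))`. The map `a ↦ a ^ a` on `ZMod (p ^ 2)` is periodic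
in `a ≥ 1` with period `p ^ 2 (p - 1)`: if `p ∣ a` then `a ^ a = 0`, and otherwise `a` is a unit
whose order divides `φ (p ^ 2) = p (p - 1)`. The period is even, so the sign is periodic too, and
for the four primes dividing `210` one period is checked by computation.
-/

open Nat

theorem Nat.Prime.mem_of_dvd_210 {p : ℕ} (hp : p.Prime) (h : p ∣ 210) :
    p ∈ ({2, 3, 5, 7} : Finset ℕ) := by
  have eq_of_dvd {q : ℕ} (hq : q.Prime) : p ∣ q → p = q := (Nat.prime_dvd_prime_iff_eq hp hq).mp
  simp only [Finset.mem_insert, Finset.mem_singleton]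
  rcases hp.prime.dvd_mul.mp (show p ∣ 2 * 3 * 5 * 7 from h) with h | h7
  · rcases hp.prime.dvd_mul.mp h with h | h5
    · rcases hp.prime.dvd_mul.mp h with h2 | h3
      · exact .inl (eq_of_dvd prime_two h2)
      · exact .inr (.inl (eq_of_dvd prime_three h3))
    · exact .inr (.inr (.inl (eq_of_dvd prime_five h5)))
  · exact .inr (.inr (.inr (eq_of_dvd (by norm_num) h7)))

theorem neg_one_pow_eq_of_modEq {R : Type*} [Ring R] {m a b : ℕ} (hm : 2 ∣ m)
    (h : a ≡ b [MOD m]) : (-1 : R) ^ a = (-1) ^ b := by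
  rw [neg_one_pow_eq_pow_mod_two, h.of_dvd hm, ← neg_one_pow_eq_pow_mod_two]

theorem Nat.two_dvd_sq_mul_sub_one (n : ℕ) : 2 ∣ n ^ 2 * (n - 1) := by
  rw [sq, mul_assoc]
  exact (Nat.even_mul_pred_self n).two_dvd.mul_left n

namespace ZMod

theorem pow_eq_pow_of_modEq_totient {n : ℕ} {x : ZMod n} (hx : IsUnit x) {a b : ℕ}
    (h : a ≡ b [MOD φ n]) : x ^ a = x ^ b := by
  obtain ⟨u, rfl⟩ := hx
  rw [← Units.val_pow_eq_pow_val, ← Units.val_pow_eq_pow_val,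
    pow_eq_pow_iff_modEq.mpr (h.of_dvd (orderOf_dvd_of_pow_eq_one (ZMod.pow_totient u)))]

theorem natCast_pow_self_eq_zero {p a : ℕ} (hp : p.Prime) (hpa : p ∣ a) (ha : a ≠ 0) :
    (a : ZMod (p ^ 2)) ^ a = 0 := by
  rw [← Nat.cast_pow, natCast_eq_zero_iff]
  exact (Nat.pow_dvd_pow p (hp.two_le.trans (Nat.le_of_dvd (Nat.pos_of_ne_zero ha) hpa))).trans
    (pow_dvd_pow_of_dvd hpa a)

theorem natCast_pow_self_eq_of_modEq {p a b : ℕ} (hp : p.Prime) (ha : a ≠ 0) (hb : b ≠ 0)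
    (h : a ≡ b [MOD p ^ 2 * (p - 1)]) : (a : ZMod (p ^ 2)) ^ a = (b : ZMod (p ^ 2)) ^ b := by
  by_cases hpa : p ∣ a
  · have hpb : p ∣ b := (h.dvd_iff ((dvd_pow_self p two_ne_zero).mul_right _)).mp hpa
    rw [natCast_pow_self_eq_zero hp hpa ha, natCast_pow_self_eq_zero hp hpb hb]
  · have hunit : IsUnit (a : ZMod (p ^ 2)) :=
      (isUnit_iff_coprime a _).mpr ((Nat.coprime_pow_right_iff two_pos _ _).mpr
        (Nat.coprime_comm.mp (hp.coprime_iff_not_dvd.mpr hpa)))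
    have htot : a ≡ b [MOD φ (p ^ 2)] := h.of_dvd <| by
      rw [Nat.totient_prime_pow hp two_pos]
      exact Nat.mul_dvd_mul_right (pow_dvd_pow p (by norm_num)) _
    rw [pow_eq_pow_of_modEq_totient hunit htot,
      (natCast_eq_natCast_iff a b _).mpr (h.of_dvd (Dvd.intro _ rfl))]

end ZMod

def selfPowSum (n u : ℕ) : ZMod n :=
  (u : ZMod n) ^ u + (-1) ^ (u + 1) * ((u + 1 : ℕ) : ZMod n) ^ (u + 1)

theorem selfPowSum_eq_of_modEq {p u v : ℕ} (hp : p.Prime) (hu : u ≠ 0) (hv : v ≠ 0)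
    (h : u ≡ v [MOD p ^ 2 * (p - 1)]) : selfPowSum (p ^ 2) u = selfPowSum (p ^ 2) v := by
  rw [selfPowSum, selfPowSum, ZMod.natCast_pow_self_eq_of_modEq hp hu hv h,
    ZMod.natCast_pow_self_eq_of_modEq hp u.succ_ne_zero v.succ_ne_zero (h.add_right 1),
    neg_one_pow_eq_of_modEq (Nat.two_dvd_sq_mul_sub_one p) (h.add_right 1)]

theorem natCast_eq_selfPowSum (n u : ℕ) [NeZero n] :
    ((u ^ u + ((n - 1) * (u + 1)) ^ (u + 1) : ℕ) : ZMod n) = selfPowSum n u := by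
  rw [selfPowSum, Nat.cast_add, Nat.cast_pow, Nat.cast_pow, Nat.cast_mul,
    Nat.cast_sub NeZero.one_le, ZMod.natCast_self, Nat.cast_one, zero_sub, mul_pow]

theorem intCast_eq_neg_selfPowSum {p κ : ℕ} (hpκ : p ∣ κ) (u : ℕ) :
    (((((u + 1 : ℕ) : ℤ) - 1) ^ u * ((κ : ℤ) ^ 2 - 1) + (-1) ^ u * ((u + 1 : ℕ) : ℤ) ^ (u + 1)
      : ℤ) : ZMod (p ^ 2)) = -selfPowSum (p ^ 2) u := by
  have hκ : (κ : ZMod (p ^ 2)) ^ 2 = 0 := by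
    rw [← Nat.cast_pow, ZMod.natCast_eq_zero_iff]
    exact pow_dvd_pow_of_dvd hpκ 2
  simp only [selfPowSum, Int.cast_add, Int.cast_mul, Int.cast_pow, Int.cast_sub,
    Int.cast_natCast, Int.cast_one, Int.cast_neg, hκ]
  push_cast
  ring

-- `(p ^ 2 - 1) * (u + 1)` stands for `-(u + 1)`, keeping the computation in `ℕ`.
theorem not_dvd_selfPowSum_of_mem : ∀ p ∈ ({2, 3, 5, 7} : Finset ℕ),
    ∀ u ∈ Finset.Ico 1 (p ^ 2 * (p - 1) + 1),
      ¬ p ^ 2 ∣ u ^ u + ((p ^ 2 - 1) * (u + 1)) ^ (u + 1) := by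
  decide +kernel

theorem C_t_not_zero_mod_p_sq_general
    (κ : ℕ) (hκ210 : κ ∣ 210)
    (p : ℕ) (hp : p.Prime) (hpκ : p ∣ κ)
    (t : ℕ) (ht : 2 ≤ t) :
    ¬ ((p : ℤ) ^ 2 ∣
        (((t : ℤ) - 1) ^ (t - 1) * ((κ : ℤ) ^ 2 - 1)
          + (-1) ^ (t - 1) * (t : ℤ) ^ t)) := by
  obtain ⟨u, rfl⟩ : ∃ u, t = u + 1 := ⟨t - 1, by omega⟩
  have : NeZero (p ^ 2) := ⟨pow_ne_zero 2 hp.ne_zero⟩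
  set L := p ^ 2 * (p - 1)
  have hL : 0 < L := Nat.mul_pos (pow_pos hp.pos 2) (Nat.sub_pos_of_lt hp.one_lt)
  have hrep : (u - 1) % L + 1 ∈ Finset.Ico 1 (L + 1) := by
    have := Nat.mod_lt (u - 1) hL
    simp only [Finset.mem_Ico]
    omega
  have hmod : u ≡ (u - 1) % L + 1 [MOD L] := by
    simpa only [Nat.sub_add_cancel (by omega : 1 ≤ u)] using
      (Nat.mod_modEq (u - 1) L).symm.add_right 1
  intro hdvd
  refine not_dvd_selfPowSum_of_mem p (hp.mem_of_dvd_210 (hpκ.trans hκ210)) _ hrep ?_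
  rw [← ZMod.natCast_eq_zero_iff, natCast_eq_selfPowSum,
    ← selfPowSum_eq_of_modEq hp (by omega) (by omega) hmod, ← neg_eq_zero,
    ← intCast_eq_neg_selfPowSum hpκ, ZMod.intCast_zmod_eq_zero_iff_dvd]
  exact_mod_cast hdvd

theorem C_t_not_zero_mod_p_sq
    (κ : ℕ) (hκ1 : 1 < κ) (hκsf : Squarefree κ) (hκ210 : κ ∣ 210)
    (p : ℕ) (hp : p.Prime) (hpκ : p ∣ κ)
    (t : ℕ) (ht : 2 ≤ t) :
    ¬ ((p : ℤ) ^ 2 ∣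
        (((t : ℤ) - 1) ^ (t - 1) * ((κ : ℤ) ^ 2 - 1)
          + (-1) ^ (t - 1) * (t : ℤ) ^ t)) :=
  C_t_not_zero_mod_p_sq_general κ hκ210 p hp hpκ t ht
end

section
/- Let k ≥ 1 be an integer and let A be an integer with A ≡ 1 (mod 4). Then the polynomial G₂(x) = (A x^{2^k} + A + (−Ax − A)^{2^k})/2 has integer coefficients, and its reduction modulo 2 equals (x² + x + 1)^{2^{k−1}} in 𝔽₂[x]. -/
open Polynomial

lemma aux_pow_expand : ∀ k : ℕ, 1 ≤ k → ∃ h : Polynomial ℤ,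
    (X + 1) ^ (2 ^ k) = X ^ (2 ^ k) + 1 + 2 * X ^ (2 ^ (k - 1)) + 4 * h := by
  intro k hk
  induction k with
  | zero => omega
  | succ n ih =>
    rcases Nat.eq_or_lt_of_le hk with h1 | h1
    · refine ⟨0, ?_⟩
      have : n = 0 := by omega
      subst this
      ring
    · obtain ⟨h, hh⟩ := ih (by omega)
      refine ⟨(X ^ (2 ^ (n - 1)) + 2 * h) ^ 2 + (X ^ (2 ^ n) + 1) * (X ^ (2 ^ (n-1)) + 2 * h), ?_⟩
      have hn : 2 ^ (n + 1) = 2 ^ n * 2 := by rw [pow_succ]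
      have h2 : n + 1 - 1 = n := rfl
      rw [h2, hn, pow_mul, pow_mul, hh]
      ring

theorem G2_integer_coeffs_and_reduction_mod_two
    (k : ℕ) (hk : 1 ≤ k) (A : ℤ) (hA : A % 4 = 1) :
    ∃ g : Polynomial ℤ,
      2 * g = Polynomial.C A * X ^ (2 ^ k) + Polynomial.C A
          + (-(Polynomial.C A) * X - Polynomial.C A) ^ (2 ^ k) ∧
      g.map (Int.castRingHom (ZMod 2)) = (X ^ 2 + X + 1) ^ (2 ^ (k - 1)) := by
  obtain ⟨h, hh⟩ := aux_pow_expand k hk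
  set n := 2 ^ k with hn
  set m := 2 ^ (k - 1) with hm
  have hAn : A ^ n % 4 = 1 := by
    have : A ^ n ≡ 1 ^ n [ZMOD 4] := Int.ModEq.pow n (by unfold Int.ModEq; omega)
    simpa [Int.ModEq] using this
  have hsum : (A + A ^ n) % 4 = 2 := by omega
  set B : ℤ := (A + A ^ n) / 2 with hB
  have h2B : 2 * B = A + A ^ n := by omega
  have hBodd : B % 2 = 1 := by omega
  have hneven : Even n := by
    rw [hn]
    exact (Nat.even_pow' (by omega)).mpr even_two
  refine ⟨Polynomial.C B * (X ^ n + 1) + Polynomial.C (A ^ n) * (X ^ m + 2 * h), ?_, ?_⟩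
  · have hneg : (-(Polynomial.C A) * X - Polynomial.C A) ^ n
        = (Polynomial.C A * X + Polynomial.C A) ^ n := by
      rw [show -(Polynomial.C A) * X - Polynomial.C A
          = -(Polynomial.C A * X + Polynomial.C A) by ring, hneven.neg_pow]
    have hC : (2 : Polynomial ℤ) * Polynomial.C B = Polynomial.C A + Polynomial.C (A ^ n) := by
      rw [← Polynomial.C_add, ← h2B, Polynomial.C_mul]
      simp
    rw [hneg, show Polynomial.C A * X + Polynomial.C A = Polynomial.C A * (X + 1) by ring,
      mul_pow, hh, ← Polynomial.C_pow]
    linear_combination (X ^ n + 1) * hC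
  · have hcast : ∀ c : ℤ, c % 2 = 1 → ((c : ZMod 2) = 1) := by
      intro c hc
      have : c = 2 * (c / 2) + 1 := by omega
      rw [this]
      push_cast
      rw [show (2 : ZMod 2) = 0 by decide]
      ring
    have hBc : ((B : ℤ) : ZMod 2) = 1 := hcast B hBodd
    have hAc : ((A ^ n : ℤ) : ZMod 2) = 1 := hcast _ (by omega)
    simp only [Polynomial.map_add, Polynomial.map_mul, Polynomial.map_pow, Polynomial.map_C,
      Polynomial.map_X, Polynomial.map_one, Polynomial.map_ofNat]
    rw [show (Int.castRingHom (ZMod 2)) B = 1 by simpa using hBc,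
      show (Int.castRingHom (ZMod 2)) (A ^ n) = 1 by simpa using hAc]
    have h2z : (2 : Polynomial (ZMod 2)) = 0 := by
      have h1 : (2 : Polynomial (ZMod 2)) = Polynomial.C 2 :=
        (map_ofNat (Polynomial.C : ZMod 2 →+* Polynomial (ZMod 2)) 2).symm
      rw [h1, show (2 : ZMod 2) = 0 by decide, Polynomial.C_0]
    rw [h2z]
    have hfrob : ((X : Polynomial (ZMod 2)) ^ 2 + X + 1) ^ (2 ^ (k-1))
        = (X ^ 2) ^ (2 ^ (k-1)) + X ^ (2 ^ (k-1)) + 1 := by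
      rw [add_pow_char_pow, add_pow_char_pow, one_pow]
    rw [hfrob, ← pow_mul, hm, hn, show 2 * 2 ^ (k-1) = 2 ^ k by
      rw [← pow_succ']; congr 1; omega]
    simp only [Polynomial.C_1, one_mul]
    ring
end
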